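/- arXiv:1401.2973 — 2 statements merged into one kernel-verified Lean document; each statement's English description precedes it below -/
import Mathlib

section
/- If a graph G is 3-connected, v is a vertex of G of degree at least 4, and G' is obtained from G by splitting v (i.e., replacing v by two adjacent vertices v1, v2 whose neighborhoods partition the neighborhood of v into two parts each of size at least 2), then G' is 3-connected. -/
open SimpleGraph

universe u v

/-! ### Basic connectivity notions -/

/-- A graph is 3-connected: at least 4 vertices and deleting any ≤ 2 vertices
leaves a connected graph. -/
def ThreeConnected {V : Type u} (G : SimpleGraph V) : Prop :=
  4 ≤ Nat.card V ∧
    ∀ s : Set V, s.ncard ≤ 2 → ((⊤ : G.Subgraph).deleteVerts s).coe.Connected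

/-- A separation of `G`: `A ∪ B = V(G)` and no edge between `A \ B` and `B \ A`. -/
def Separation {V : Type u} (G : SimpleGraph V) (A B : Set V) : Prop :=
  A ∪ B = Set.univ ∧ ∀ a ∈ A \ B, ∀ b ∈ B \ A, ¬ G.Adj a b

/-- The edges of `G` induced by a vertex set `A`. -/
def inducedEdges {V : Type u} (G : SimpleGraph V) (A : Set V) : Set (Sym2 V) :=
  {e ∈ G.edgeSet | ∀ x ∈ e, x ∈ A}

/-- Weakly 4-connected: 3-connected, at least 5 vertices, and every separation of order
at most three has a side inducing at most 4 edges. -/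
def WeaklyFourConnected {V : Type u} (G : SimpleGraph V) : Prop :=
  ThreeConnected G ∧ 5 ≤ Nat.card V ∧
    ∀ A B : Set V, Separation G A B → (A ∩ B).ncard ≤ 3 →
      (inducedEdges G A).ncard ≤ 4 ∨ (inducedEdges G B).ncard ≤ 4

/-! ### Vertex splitting and expansions -/

/-- Valid data for splitting vertex `v`: `N1, N2` partition the neighborhood of `v`
with each part of size at least 2. -/
def IsValidSplitData {V : Type u} (G : SimpleGraph V) (v : V) (N1 N2 : Set V) : Prop :=
  N1 ∪ N2 = G.neighborSet v ∧ Disjoint N1 N2 ∧ 2 ≤ N1.ncard ∧ 2 ≤ N2.ncard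

/-- The graph obtained by splitting vertex `v` according to the partition `N1, N2`.
The vertex `some v` plays the role of `v₁` and `none` plays the role of `v₂`;
vertices `some a` for `a ≠ v` are the old vertices. -/
def splitGraph {V : Type u} (G : SimpleGraph V) (v : V) (N1 N2 : Set V) :
    SimpleGraph (Option V) :=
  SimpleGraph.fromRel (fun x y =>
    (∃ a b, x = some a ∧ y = some b ∧ a ≠ v ∧ b ≠ v ∧ G.Adj a b) ∨
    (x = some v ∧ ∃ b ∈ N1, y = some b) ∨
    (x = none ∧ ∃ b ∈ N2, y = some b) ∨
    (x = none ∧ y = some v))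

/-- `IsExpansion G G' π newE`: `G'` is obtained from `G` by repeatedly splitting
vertices of degree at least four; `π` maps each vertex of `G'` to the vertex of `G`
it arose from (so the branch-sets are the fibres of `π`) and `newE` is the set of
new edges created by the splits. -/
inductive IsExpansion {V : Type u} (G : SimpleGraph V) :
    {W : Type u} → SimpleGraph W → (W → V) → Set (Sym2 W) → Prop
  | refl : IsExpansion G G id ∅
  | step {W : Type u} {G' : SimpleGraph W} {π : W → V} {newE : Set (Sym2 W)}
      (h : IsExpansion G G' π newE) (v : W) (N1 N2 : Set W)
      (hs : IsValidSplitData G' v N1 N2) :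
      IsExpansion G (splitGraph G' v N1 N2) (fun w => π (w.getD v))
        (Sym2.map some '' newE ∪ {s(some v, none)})

/-! ### Minors -/

/-- `G` is isomorphic to a minor of `H`: there are disjoint nonempty connected
branch sets in `H`, one for each vertex of `G`, with edges of `G` realized by
edges of `H` between the corresponding branch sets. -/
def IsMinorOf {V : Type u} {W : Type v} (G : SimpleGraph V) (H : SimpleGraph W) : Prop :=
  ∃ f : V → Set W,
    (∀ a, (f a).Nonempty) ∧
    (∀ a, (H.induce (f a)).Connected) ∧
    (∀ a b, a ≠ b → Disjoint (f a) (f b)) ∧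
    (∀ a b, G.Adj a b → ∃ x ∈ f a, ∃ y ∈ f b, H.Adj x y)

/-! ### Cycles, segments, disk systems -/

/-- A subgraph is a cycle: nonempty, connected, and every vertex has exactly
two neighbours in it. -/
def IsCycleSub {V : Type u} {G : SimpleGraph V} (C : G.Subgraph) : Prop :=
  C.verts.Nonempty ∧ C.Connected ∧ ∀ w ∈ C.verts, (C.neighborSet w).ncard = 2

/-- A subgraph is a path: nonempty, connected, maximum degree at most two, and
some vertex of degree at most one. -/
def IsPathSub {V : Type u} {G : SimpleGraph V} (P : G.Subgraph) : Prop :=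
  P.verts.Nonempty ∧ P.Connected ∧ (∀ w ∈ P.verts, (P.neighborSet w).ncard ≤ 2) ∧
    ∃ w ∈ P.verts, (P.neighborSet w).ncard ≤ 1

/-- A segment of `G`: a maximal path (with at least one edge) all of whose internal
vertices have degree exactly two in `G`. -/
def IsSegment {V : Type u} (G : SimpleGraph V) (P : G.Subgraph) : Prop :=
  IsPathSub P ∧ P.edgeSet.Nonempty ∧
    (∀ w ∈ P.verts, (P.neighborSet w).ncard = 2 → (G.neighborSet w).ncard = 2) ∧
    (∀ w ∈ P.verts, (P.neighborSet w).ncard ≤ 1 → (G.neighborSet w).ncard ≠ 2)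

/-- Axiom (D1): a cycle double cover: a set of cycles such that every edge of `G`
lies on exactly two of them. -/
def IsCDC {V : Type u} (G : SimpleGraph V) (D : Set G.Subgraph) : Prop :=
  (∀ C ∈ D, IsCycleSub C) ∧ ∀ e ∈ G.edgeSet, {C ∈ D | e ∈ C.edgeSet}.ncard = 2

/-- Axiom (D2): at every vertex the incident edges admit a cyclic order in which
every pair of consecutive edges lies on exactly one common disk. -/
def AxiomD2 {V : Type u} (G : SimpleGraph V) (D : Set G.Subgraph) : Prop :=
  ∀ w : V, ∃ σ : Equiv.Perm (G.neighborSet w),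
    (∀ x y, σ.SameCycle x y) ∧
    ∀ u : G.neighborSet w,
      {C ∈ D | s(w, (u : V)) ∈ C.edgeSet ∧ s(w, ((σ u : G.neighborSet w) : V)) ∈ C.edgeSet}.ncard = 1

/-- Axiom (D3): any two distinct disks intersect in at most one vertex or in a segment. -/
def AxiomD3 {V : Type u} (G : SimpleGraph V) (D : Set G.Subgraph) : Prop :=
  ∀ C1 ∈ D, ∀ C2 ∈ D, C1 ≠ C2 → (C1 ⊓ C2).verts.Subsingleton ∨ IsSegment G (C1 ⊓ C2)

/-- A weak disk system: a cycle double cover satisfying (D3). -/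
def IsWeakDiskSystem {V : Type u} (G : SimpleGraph V) (D : Set G.Subgraph) : Prop :=
  IsCDC G D ∧ AxiomD3 G D

/-- A disk system: a cycle double cover satisfying (D2) and (D3). -/
def IsDiskSystem {V : Type u} (G : SimpleGraph V) (D : Set G.Subgraph) : Prop :=
  IsCDC G D ∧ AxiomD2 G D ∧ AxiomD3 G D

/-- Two vertices are confluent if a common disk contains both. -/
def ConfluentVV {V : Type u} {G : SimpleGraph V} (D : Set G.Subgraph) (x y : V) : Prop :=
  ∃ C ∈ D, x ∈ C.verts ∧ y ∈ C.verts

/-- A vertex is confluent with an edge if a common disk contains both. -/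
def ConfluentVE {V : Type u} {G : SimpleGraph V} (D : Set G.Subgraph) (x : V) (e : Sym2 V) : Prop :=
  ∃ C ∈ D, x ∈ C.verts ∧ e ∈ C.edgeSet

/-- Two edges are confluent if a common disk contains both. -/
def ConfluentEE {V : Type u} {G : SimpleGraph V} (D : Set G.Subgraph) (e f : Sym2 V) : Prop :=
  ∃ C ∈ D, e ∈ C.edgeSet ∧ f ∈ C.edgeSet

/-! ### Conforming splits -/

/-- The split of `v` along disks `D1, D2`: it is a valid split and, among the disks
through `v`, exactly `D1` and `D2` meet both `N1` and `N2`, and they intersect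
precisely in `v` (axioms (S1) and (S2)). -/
def SplitConformingWith {V : Type u} (G : SimpleGraph V) (D : Set G.Subgraph) (v : V)
    (N1 N2 : Set V) (D1 D2 : G.Subgraph) : Prop :=
  IsValidSplitData G v N1 N2 ∧ D1 ∈ D ∧ D2 ∈ D ∧ D1 ≠ D2 ∧
    {C ∈ D | v ∈ C.verts ∧ (C.verts ∩ N1).Nonempty ∧ (C.verts ∩ N2).Nonempty} = {D1, D2} ∧
    (D1 ⊓ D2).verts = {v}

/-- A conforming split (with respect to `D`). -/
def IsConformingSplit {V : Type u} (G : SimpleGraph V) (D : Set G.Subgraph) (v : V)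
    (N1 N2 : Set V) : Prop :=
  ∃ D1 D2, SplitConformingWith G D v N1 N2 D1 D2

/-- A conforming split along the disk `C`. -/
def IsConformingSplitAlong {V : Type u} (G : SimpleGraph V) (D : Set G.Subgraph) (v : V)
    (N1 N2 : Set V) (C : G.Subgraph) : Prop :=
  ∃ E, SplitConformingWith G D v N1 N2 C E ∨ SplitConformingWith G D v N1 N2 E C

/-- `C'` (a cycle of the split graph) lifts the cycle `C` of `G`: contracting the new
edge maps `C'` onto `C`. -/
def DiskLift {V : Type u} (G : SimpleGraph V) (v : V) {N1 N2 : Set V}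
    (C' : (splitGraph G v N1 N2).Subgraph) (C : G.Subgraph) : Prop :=
  C.verts = (fun w : Option V => w.getD v) '' C'.verts ∧
  C.edgeSet = Sym2.map (fun w : Option V => w.getD v) '' C'.edgeSet \ {s(v, v)}

/-- The disk system induced in the split graph: the cycles that lift disks of `D`. -/
def InducedDisks {V : Type u} (G : SimpleGraph V) (D : Set G.Subgraph) (v : V)
    (N1 N2 : Set V) : Set (splitGraph G v N1 N2).Subgraph :=
  {C' | IsCycleSub C' ∧ ∃ C ∈ D, DiskLift G v C' C}

/-- Conforming expansions, together with the induced disk system and the set of new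
edges. Each successive split is conforming with respect to the disk system induced
so far. -/
inductive IsConformingExpansion {V : Type u} (G : SimpleGraph V) (D : Set G.Subgraph) :
    {W : Type u} → (G' : SimpleGraph W) → Set G'.Subgraph → Set (Sym2 W) → Prop
  | refl : IsConformingExpansion G D G D ∅
  | step {W : Type u} {G' : SimpleGraph W} {D' : Set G'.Subgraph} {newE : Set (Sym2 W)}
      (h : IsConformingExpansion G D G' D' newE) (v : W) (N1 N2 : Set W)
      (hc : IsConformingSplit G' D' v N1 N2) :
      IsConformingExpansion G D (splitGraph G' v N1 N2) (InducedDisks G' D' v N1 N2)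
        (Sym2.map some '' newE ∪ {s(some v, none)})

/-- A non-conforming expansion: a conforming expansion followed by a non-conforming
split, followed by an arbitrary further expansion. -/
def IsNonConformingExpansion {V W : Type u} (G : SimpleGraph V) (D : Set G.Subgraph)
    (H : SimpleGraph W) : Prop :=
  ∃ (W₁ : Type u) (G₁ : SimpleGraph W₁) (D₁ : Set G₁.Subgraph) (newE₁ : Set (Sym2 W₁)),
    IsConformingExpansion G D G₁ D₁ newE₁ ∧
    ∃ (v : W₁) (N1 N2 : Set W₁), IsValidSplitData G₁ v N1 N2 ∧
      ¬ IsConformingSplit G₁ D₁ v N1 N2 ∧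
      ∃ (π : W → Option W₁) (newE : Set (Sym2 W)),
        IsExpansion (splitGraph G₁ v N1 N2) H π newE

/-! ### Building blocks for the enlargement operations -/

/-- Add the edge `uv` to `G`. -/
def addE {V : Type u} (G : SimpleGraph V) (x y : V) : SimpleGraph V :=
  G ⊔ SimpleGraph.fromEdgeSet {s(x, y)}

/-- Add a new vertex (`none`) adjacent exactly to the vertices of `S`. -/
def addVertexAdj {V : Type u} (G : SimpleGraph V) (S : Set V) : SimpleGraph (Option V) :=
  SimpleGraph.fromRel (fun x y =>
    (∃ a b, x = some a ∧ y = some b ∧ G.Adj a b) ∨ (x = none ∧ ∃ a ∈ S, y = some a))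

/-- Subdivide the edge `xy` (the new vertex is `none`) and join `u` to the new vertex. -/
def subdivideJoin {V : Type u} (G : SimpleGraph V) (x y u : V) : SimpleGraph (Option V) :=
  SimpleGraph.fromRel (fun a b =>
    (∃ p q, a = some p ∧ b = some q ∧ G.Adj p q ∧ s(p, q) ≠ s(x, y)) ∨
    (a = none ∧ (b = some x ∨ b = some y ∨ b = some u)))

/-- Subdivide the edges `ab` and `cd` (new vertices `some none` and `none`) and join
the two new vertices by an edge. -/
def doubleSubdivideJoin {V : Type u} (G : SimpleGraph V) (a b c d : V) :
    SimpleGraph (Option (Option V)) :=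
  SimpleGraph.fromRel (fun p q =>
    (∃ x y, p = some (some x) ∧ q = some (some y) ∧ G.Adj x y ∧
        s(x, y) ≠ s(a, b) ∧ s(x, y) ≠ s(c, d)) ∨
    (p = some none ∧ (q = some (some a) ∨ q = some (some b))) ∨
    (p = none ∧ (q = some (some c) ∨ q = some (some d) ∨ q = some none)))

/-- `a, b, c, d` occur on the cycle `C` in this cyclic order (in one of the two
orientations): `{a,c}` separates `b` from `d` on `C` and vice versa. -/
def CyclicOrderOn {V : Type u} {G : SimpleGraph V} (C : G.Subgraph) (a b c d : V) : Prop :=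
  a ∈ C.verts ∧ b ∈ C.verts ∧ c ∈ C.verts ∧ d ∈ C.verts ∧
  [a, b, c, d].Nodup ∧
  (∀ (hb : b ∈ (C.deleteVerts {a, c}).verts) (hd : d ∈ (C.deleteVerts {a, c}).verts),
    ¬ (C.deleteVerts {a, c}).coe.Reachable ⟨b, hb⟩ ⟨d, hd⟩) ∧
  (∀ (ha : a ∈ (C.deleteVerts {b, d}).verts) (hc : c ∈ (C.deleteVerts {b, d}).verts),
    ¬ (C.deleteVerts {b, d}).coe.Reachable ⟨a, ha⟩ ⟨c, hc⟩)

/-! ### The enlargement operations, phrased as "H has a minor isomorphic to a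
type-i enlargement of G with respect to D" -/

/-- Type 1 (non-conforming jump). -/
def HasType1Minor {V : Type u} {U : Type v} (G : SimpleGraph V) (D : Set G.Subgraph)
    (H : SimpleGraph U) : Prop :=
  ∃ x y : V, x ≠ y ∧ ¬ ConfluentVV D x y ∧ IsMinorOf (addE G x y) H

/-- Type 2 (cross). -/
def HasType2Minor {V : Type u} {U : Type v} (G : SimpleGraph V) (D : Set G.Subgraph)
    (H : SimpleGraph U) : Prop :=
  ∃ C ∈ D, ∃ a b c d : V, CyclicOrderOn C a b c d ∧
    IsMinorOf (addE (addE G a c) b d) H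

/-- Type 3 (non-conforming split). -/
def HasType3Minor {V : Type u} {U : Type v} (G : SimpleGraph V) (D : Set G.Subgraph)
    (H : SimpleGraph U) : Prop :=
  ∃ (w : V) (N1 N2 : Set V), IsValidSplitData G w N1 N2 ∧
    ¬ IsConformingSplit G D w N1 N2 ∧ IsMinorOf (splitGraph G w N1 N2) H

/-- Type 4 (split + non-conforming jump). In `splitGraph G v N1 N2` the vertices
`some v` and `none` play the roles of `v₁` and `v₂`. -/
def HasType4Minor {V : Type u} {U : Type v} (G : SimpleGraph V) (D : Set G.Subgraph)
    (H : SimpleGraph U) : Prop :=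
  ∃ C ∈ D, ∃ x w : V, x ∈ C.verts ∧ w ∈ C.verts ∧ ¬ G.Adj x w ∧ x ≠ w ∧
    ∃ N1 N2 : Set V, IsConformingSplit G D w N1 N2 ∧
      ¬ ConfluentVV (InducedDisks G D w N1 N2) (some x) none ∧
      IsMinorOf (addE (splitGraph G w N1 N2) (some x) none) H

/-- Type 5 (double split + non-conforming jump). -/
def HasType5Minor {V : Type u} {U : Type v} (G : SimpleGraph V) (D : Set G.Subgraph)
    (H : SimpleGraph U) : Prop :=
  ∃ x w : V, G.Adj x w ∧ ∃ C1 ∈ D, ∃ C2 ∈ D, C1 ≠ C2 ∧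
    s(x, w) ∈ C1.edgeSet ∧ s(x, w) ∈ C2.edgeSet ∧
    ∃ M1 M2 : Set V, IsConformingSplitAlong G D x M1 M2 C1 ∧ w ∈ M1 ∧
    ∃ C2' ∈ InducedDisks G D x M1 M2, DiskLift G x C2' C2 ∧
    ∃ P1 P2 : Set (Option V),
      IsConformingSplitAlong (splitGraph G x M1 M2) (InducedDisks G D x M1 M2)
        (some w) P1 P2 C2' ∧ (some x) ∈ P1 ∧
      IsMinorOf (addE (splitGraph (splitGraph G x M1 M2) (some w) P1 P2)
        (some none) none) H

/-- Type 6 (split + cross). -/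
def HasType6Minor {V : Type u} {U : Type v} (G : SimpleGraph V) (D : Set G.Subgraph)
    (H : SimpleGraph U) : Prop :=
  ∃ C ∈ D, ∃ x w z : V, x ∈ C.verts ∧ w ∈ C.verts ∧ z ∈ C.verts ∧
    ¬ G.Adj x w ∧ ¬ G.Adj x z ∧ w ≠ z ∧ x ≠ w ∧ x ≠ z ∧
    ∃ N1 N2 : Set V, IsConformingSplitAlong G D x N1 N2 C ∧
    ∃ C' ∈ InducedDisks G D x N1 N2, DiskLift G x C' C ∧
      CyclicOrderOn C' (some x) none (some w) (some z) ∧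
      IsMinorOf (addE (addE (splitGraph G x N1 N2) (some x) (some w)) none (some z)) H

/-- Type 7 (double split + cross). -/
def HasType7Minor {V : Type u} {U : Type v} (G : SimpleGraph V) (D : Set G.Subgraph)
    (H : SimpleGraph U) : Prop :=
  ∃ C ∈ D, ∃ x w : V, x ∈ C.verts ∧ w ∈ C.verts ∧ ¬ G.Adj x w ∧ x ≠ w ∧
    ∃ M1 M2 : Set V, IsConformingSplitAlong G D x M1 M2 C ∧
    ∃ C' ∈ InducedDisks G D x M1 M2, DiskLift G x C' C ∧
    ∃ P1 P2 : Set (Option V),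
      IsConformingSplitAlong (splitGraph G x M1 M2) (InducedDisks G D x M1 M2)
        (some w) P1 P2 C' ∧
    ∃ C'' ∈ InducedDisks (splitGraph G x M1 M2) (InducedDisks G D x M1 M2) (some w) P1 P2,
      DiskLift (splitGraph G x M1 M2) (some w) C'' C' ∧
      CyclicOrderOn C'' (some (some x)) (some none) (some (some w)) none ∧
      IsMinorOf (addE (addE (splitGraph (splitGraph G x M1 M2) (some w) P1 P2)
        (some (some x)) (some (some w))) (some none) none) H

/-- Weak type 8 (weak triad): add a vertex adjacent to three vertices not all on
a common disk. -/
def HasWeakType8Minor {V : Type u} {U : Type v} (G : SimpleGraph V) (D : Set G.Subgraph)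
    (H : SimpleGraph U) : Prop :=
  ∃ x1 x2 x3 : V, x1 ≠ x2 ∧ x1 ≠ x3 ∧ x2 ≠ x3 ∧
    (¬ ∃ C ∈ D, x1 ∈ C.verts ∧ x2 ∈ C.verts ∧ x3 ∈ C.verts) ∧
    IsMinorOf (addVertexAdj G {x1, x2, x3}) H

/-- Type 8 (non-separating triad). -/
def HasType8Minor {V : Type u} {U : Type v} (G : SimpleGraph V) (D : Set G.Subgraph)
    (H : SimpleGraph U) : Prop :=
  ∃ x1 x2 x3 : V, x1 ≠ x2 ∧ x1 ≠ x3 ∧ x2 ≠ x3 ∧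
    ConfluentVV D x1 x2 ∧ ConfluentVV D x1 x3 ∧ ConfluentVV D x2 x3 ∧
    (¬ ∃ C ∈ D, x1 ∈ C.verts ∧ x2 ∈ C.verts ∧ x3 ∈ C.verts) ∧
    ¬ G.Adj x1 x2 ∧ ¬ G.Adj x1 x3 ∧ ¬ G.Adj x2 x3 ∧
    ((⊤ : G.Subgraph).deleteVerts {x1, x2, x3}).coe.Connected ∧
    IsMinorOf (addVertexAdj G {x1, x2, x3}) H

/-- Weak type 9 (weak non-conforming T-edge). -/
def HasWeakType9Minor {V : Type u} {U : Type v} (G : SimpleGraph V) (D : Set G.Subgraph)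
    (H : SimpleGraph U) : Prop :=
  ∃ x y z : V, G.Adj x y ∧ ¬ ConfluentVE D z s(x, y) ∧
    IsMinorOf (subdivideJoin G x y z) H

/-- Type 9 (non-conforming T-edge). -/
def HasType9Minor {V : Type u} {U : Type v} (G : SimpleGraph V) (D : Set G.Subgraph)
    (H : SimpleGraph U) : Prop :=
  ∃ x y z : V, G.Adj x y ∧ ¬ ConfluentVE D z s(x, y) ∧
    ConfluentVV D z x ∧ ConfluentVV D z y ∧ ¬ G.Adj z x ∧ ¬ G.Adj z y ∧
    ((⊤ : G.Subgraph).deleteVerts {z, x, y}).coe.Connected ∧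
    IsMinorOf (subdivideJoin G x y z) H

/-! ### Prism, peripheral cycles, planarity -/

/-- The prism: the complement of a 6-cycle on six vertices. -/
def prismGraph : SimpleGraph (Fin 6) :=
  (SimpleGraph.fromRel (fun i j : Fin 6 => j = i + 1))ᶜ

def IsPrism {V : Type u} (G : SimpleGraph V) : Prop :=
  Nonempty (G ≃g prismGraph)

/-- A peripheral cycle: an induced cycle whose deletion leaves a connected graph. -/
def IsPeripheral {V : Type u} (G : SimpleGraph V) (C : G.Subgraph) : Prop :=
  IsCycleSub C ∧ C.IsInduced ∧ ((⊤ : G.Subgraph).deleteVerts C.verts).coe.Connected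

/-- The set of all peripheral cycles of `G`. -/
def peripheralDisks {V : Type u} (G : SimpleGraph V) : Set G.Subgraph :=
  {C | IsPeripheral G C}

/-- Planarity, encoded via Wagner's theorem: no `K₅` and no `K₃,₃` minor. -/
def IsPlanar {V : Type u} (G : SimpleGraph V) : Prop :=
  ¬ IsMinorOf (completeGraph (Fin 5)) G ∧
  ¬ IsMinorOf (completeBipartiteGraph (Fin 3) (Fin 3)) G

/-- Type 10 (the enlargement of a prism, i.e. `V₈`). -/
def HasType10Minor {V : Type u} {U : Type v} (G : SimpleGraph V) (H : SimpleGraph U) : Prop :=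
  IsPrism G ∧ ∃ a b c d : V, G.Adj a b ∧ G.Adj c d ∧ s(a, b) ≠ s(c, d) ∧
    (∃ t, G.Adj a t ∧ G.Adj b t) ∧ (∃ t, G.Adj c t ∧ G.Adj d t) ∧
    (¬ ∃ C : G.Subgraph, IsPeripheral G C ∧ s(a, b) ∈ C.edgeSet ∧ s(c, d) ∈ C.edgeSet) ∧
    IsMinorOf (doubleSubdivideJoin G a b c d) H

/-! ### Subdivisions -/

/-- Data witnessing that `S` is (isomorphic to) a subdivision of `Gb`:
an injection `f` of branch-vertices together with internally disjoint paths of `S`,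
one for each edge of `Gb`, covering `S`. -/
structure SubdivisionData {V : Type u} {W : Type v} (S : SimpleGraph V)
    (Gb : SimpleGraph W) where
  f : W → V
  path : ∀ a b : W, Gb.Adj a b → S.Walk (f a) (f b)
  inj : Function.Injective f
  isPath : ∀ a b hab, (path a b hab).IsPath
  symmSupport : ∀ a b (hab : Gb.Adj a b),
    (path b a hab.symm).support = (path a b hab).support.reverse
  interDisj : ∀ a b hab c d hcd, s(a, b) ≠ s(c, d) →
    ∀ x, x ∈ (path a b hab).support → x ∈ (path c d hcd).support → x ∈ Set.range f
  branchOnPath : ∀ a b hab (w : W), f w ∈ (path a b hab).support → w = a ∨ w = b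
  coverV : ∀ x : V, x ∈ Set.range f ∨ ∃ a b hab, x ∈ (path a b hab).support
  coverE : ∀ e ∈ S.edgeSet, ∃ a b hab, e ∈ (path a b hab).edges

/-- `G` is a subdivision of `Gb`. -/
def IsSubdivisionOf {V : Type u} {W : Type v} (S : SimpleGraph V) (Gb : SimpleGraph W) : Prop :=
  Nonempty (SubdivisionData S Gb)

/-- The cycle of the subdivision corresponding to a cycle `C` of the base graph
(the union of the paths replacing the edges of `C`). -/
def SubdivisionData.inducedDisk {V : Type u} {W : Type v} {S : SimpleGraph V}
    {Gb : SimpleGraph W} (sd : SubdivisionData S Gb) (C : Gb.Subgraph) : S.Subgraph where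
  verts := {x | ∃ (a b : W) (hC : C.Adj a b), x ∈ (sd.path a b (C.adj_sub hC)).support}
  Adj x y := ∃ (a b : W) (hC : C.Adj a b), s(x, y) ∈ (sd.path a b (C.adj_sub hC)).edges
  adj_sub := by
    rintro x y ⟨a, b, hC, he⟩
    exact (SimpleGraph.mem_edgeSet S).mp ((sd.path a b (C.adj_sub hC)).edges_subset_edgeSet he)
  edge_vert := by
    rintro x y ⟨a, b, hC, he⟩
    exact ⟨a, b, hC, SimpleGraph.Walk.fst_mem_support_of_mem_edges _ he⟩
  symm := by
    constructor
    rintro x y ⟨a, b, hC, he⟩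
    exact ⟨a, b, hC, by rwa [Sym2.eq_swap]⟩

/-- The weak disk system induced in the subdivision by a system of the base graph. -/
def SubdivisionData.inducedDisks {V : Type u} {W : Type v} {S : SimpleGraph V}
    {Gb : SimpleGraph W} (sd : SubdivisionData S Gb) (D : Set Gb.Subgraph) :
    Set S.Subgraph :=
  sd.inducedDisk '' D

/-! ### Bridges and locally planar extensions -/

/-- `B` is an `S`-bridge of `H`: either a single edge of `H` not in `S` with both ends
in `S`, or a component of `H − V(S)` together with all edges to `S`. -/
def IsBridgeOf {U : Type u} {H : SimpleGraph U} (S B : H.Subgraph) : Prop :=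
  (∃ x y : U, H.Adj x y ∧ s(x, y) ∉ S.edgeSet ∧ x ∈ S.verts ∧ y ∈ S.verts ∧
      B.verts = {x, y} ∧ ∀ p q, B.Adj p q ↔ s(p, q) = s(x, y)) ∨
  (∃ J : Set U, J.Nonempty ∧ J ∩ S.verts = ∅ ∧
    (∀ x ∈ J, ∀ y, H.Adj x y → y ∉ S.verts → y ∈ J) ∧ (H.induce J).Connected ∧
    B.verts = J ∪ {y ∈ S.verts | ∃ x ∈ J, H.Adj x y} ∧
    ∀ p q, B.Adj p q ↔ (H.Adj p q ∧ (p ∈ J ∨ q ∈ J)))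

/-- The induced system `D` (of cycles of `S.coe`) is locally planar in `H`:
every bridge attaches to a single disk, and for each disk the union of the disk
with its bridges has a planar drawing with the disk bounding the unbounded face
(encoded: adding an apex vertex joined to the disk keeps the graph planar). -/
def LocallyPlanar {U : Type u} (H : SimpleGraph U) (S : H.Subgraph)
    (D : Set S.coe.Subgraph) : Prop :=
  ∃ φ : H.Subgraph → S.coe.Subgraph,
    (∀ B, IsBridgeOf S B → φ B ∈ D ∧
      ∀ x ∈ B.verts ∩ S.verts, x ∈ Subtype.val '' (φ B).verts) ∧
    ∀ C ∈ D, IsPlanar (addVertexAdj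
      ((SimpleGraph.Subgraph.coeSubgraph C ⊔
        ⨆ B ∈ {B : H.Subgraph | IsBridgeOf S B ∧ φ B = C}, B).coe)
      {x | (x : U) ∈ Subtype.val '' C.verts})

/-- The disk system `D` of `G` has a locally planar extension into `H`. -/
def HasLocallyPlanarExtension {V U : Type u} (G : SimpleGraph V) (D : Set G.Subgraph)
    (H : SimpleGraph U) : Prop :=
  ∃ (W : Type u) (G' : SimpleGraph W) (D' : Set G'.Subgraph) (newE : Set (Sym2 W)),
    IsConformingExpansion G D G' D' newE ∧
    ∃ (S : H.Subgraph) (sd : SubdivisionData S.coe G'),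
      LocallyPlanar H S (sd.inducedDisks D')

/-! ### Degenerate separations -/

/-- A degenerate separation of order three. -/
def Degenerate {V : Type u} (G : SimpleGraph V) (A B : Set V) : Prop :=
  ((A \ B).ncard = 1 ∧ ∀ x ∈ A ∩ B, ∀ y ∈ A ∩ B, ¬ G.Adj x y) ∨
  (∃ v1 v2 v3 u1 u2 u3 : V, A ∩ B = {v1, v2, v3} ∧
    v1 ≠ v2 ∧ v1 ≠ v3 ∧ v2 ≠ v3 ∧
    u1 ∈ A ∧ u2 ∈ A ∧ u3 ∈ A ∧ G.Adj u1 u2 ∧ G.Adj u1 u3 ∧ G.Adj u2 u3 ∧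
    (u1 = v1 ∨ G.Adj u1 v1) ∧ (u2 = v2 ∨ G.Adj u2 v2) ∧ (u3 = v3 ∨ G.Adj u3 v3) ∧
    A ⊆ {u1, u2, u3, v1, v2, v3} ∧
    ∀ x ∈ A, ∀ y ∈ A, G.Adj x y →
      s(x, y) ∈ ({s(u1, v1), s(u2, v2), s(u3, v3),
                  s(u1, u2), s(u1, u3), s(u2, u3)} : Set (Sym2 V)))

/-!
Let `π = (·.getD v)` contract the new edge `v₁v₂`. For a set `S` of at most two vertices of the
split graph `G'`, `π(S)` has at most two vertices, so `G - π(S)` is connected. Its walks lift to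
`G' - S`: an edge `va` becomes `v₁a` or the path `v₁v₂a`, and `v₂ ∉ S` whenever `v ∉ π(S)`.
Every vertex of `G' - S` off the lift is `v₁` or `v₂` with `v ∈ π(S)`; then `π(S)` has at most
one vertex besides `v`, so it misses one of the (at least two) vertices of `N1`, resp. `N2`,
which is a neighbour on the lift.
-/

theorem Set.exists_mem_notMem_of_ncard_le_ncard {α : Type*} [Finite α] {N U : Set α} {v : α}
    (hvU : v ∈ U) (hvN : v ∉ N) (hUN : U.ncard ≤ N.ncard) : ∃ b ∈ N, b ∉ U := by
  obtain ⟨b, hb, hbU⟩ := Set.exists_mem_notMem_of_ncard_lt_ncard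
    (hUN.trans_lt (Nat.lt_succ_self _) |>.trans_eq (Set.ncard_insert_of_notMem hvN).symm)
  exact ⟨b, (Set.mem_insert_iff.mp hb).resolve_left (by rintro rfl; exact hbU hvU), hbU⟩

namespace SimpleGraph

local notation:65 G:66 " ⊖ᵥ " s:66 =>
  SimpleGraph.Subgraph.coe (SimpleGraph.Subgraph.deleteVerts (⊤ : SimpleGraph.Subgraph G) s)

theorem Reachable.map_of_forall_adj {V W : Type*} {G : SimpleGraph V} {H : SimpleGraph W}
    (f : V → W) (hf : ∀ a b, G.Adj a b → H.Reachable (f a) (f b)) {a b : V}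
    (hab : G.Reachable a b) : H.Reachable (f a) (f b) := by
  simp only [reachable_iff_reflTransGen] at hf hab ⊢
  exact Relation.ReflTransGen.lift' f hf _ _ hab

theorem Subgraph.deleteVerts_top_coe_adj {V : Type*} {G : SimpleGraph V} {s : Set V}
    {x y : ((⊤ : G.Subgraph).deleteVerts s).verts} :
    (G ⊖ᵥ s).Adj x y ↔ G.Adj x y := by
  simp [x.2.2, y.2.2]

section splitGraph

variable {V : Type u} {G : SimpleGraph V} {v : V} {N1 N2 : Set V}

theorem splitGraph_adj_some_some {a b : V} (ha : a ≠ v) (hb : b ≠ v) :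
    (splitGraph G v N1 N2).Adj (some a) (some b) ↔ G.Adj a b := by
  simpa [splitGraph, ha, hb, G.adj_comm b a] using @Adj.ne _ G a b

theorem splitGraph_adj_some_of_mem_left {b : V} (hb : b ∈ N1) (hbv : b ≠ v) :
    (splitGraph G v N1 N2).Adj (some v) (some b) := by
  simp [splitGraph, hb, hbv.symm]

theorem splitGraph_adj_none_of_mem_right {b : V} (hb : b ∈ N2) :
    (splitGraph G v N1 N2).Adj none (some b) := by
  simp [splitGraph, hb]

theorem splitGraph_adj_some_none : (splitGraph G v N1 N2).Adj (some v) none := by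
  simp [splitGraph]

theorem eq_of_mem_image_getD {S : Set (Option V)} {a : V}
    (ha : a ∈ (fun w : Option V => w.getD v) '' S) (haS : some a ∉ S) : a = v := by
  obtain ⟨_ | b, hb, rfl⟩ := ha
  · rfl
  · exact absurd hb haS

variable (G N1 N2) in
def splitLift (S : Set (Option V))
    (x : ((⊤ : G.Subgraph).deleteVerts ((fun w : Option V => w.getD v) '' S)).verts) :
    ((⊤ : (splitGraph G v N1 N2).Subgraph).deleteVerts S).verts :=
  ⟨some x, trivial, fun h => x.2.2 ⟨_, h, rfl⟩⟩

theorem reachable_splitLift_of_adj_split_vertex (hN : G.neighborSet v ⊆ N1 ∪ N2)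
    {S : Set (Option V)}
    {y : ((⊤ : G.Subgraph).deleteVerts ((fun w : Option V => w.getD v) '' S)).verts}
    (hv : v ∈ ((⊤ : G.Subgraph).deleteVerts ((fun w : Option V => w.getD v) '' S)).verts)
    (hvy : G.Adj v y) :
    (splitGraph G v N1 N2 ⊖ᵥ S).Reachable (splitLift G N1 N2 S ⟨v, hv⟩)
      (splitLift G N1 N2 S y) := by
  rcases hN hvy with hy1 | hy2
  · exact (Subgraph.deleteVerts_top_coe_adj.mpr
      (splitGraph_adj_some_of_mem_left hy1 hvy.ne.symm)).reachable
  · have hnone : (none : Option V) ∉ S := fun h => hv.2 ⟨none, h, rfl⟩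
    let z : ((⊤ : (splitGraph G v N1 N2).Subgraph).deleteVerts S).verts :=
      ⟨none, trivial, hnone⟩
    have hvz : (splitGraph G v N1 N2 ⊖ᵥ S).Adj (splitLift G N1 N2 S ⟨v, hv⟩) z :=
      Subgraph.deleteVerts_top_coe_adj.mpr splitGraph_adj_some_none
    have hzy : (splitGraph G v N1 N2 ⊖ᵥ S).Adj z (splitLift G N1 N2 S y) :=
      Subgraph.deleteVerts_top_coe_adj.mpr (splitGraph_adj_none_of_mem_right hy2)
    exact hvz.reachable.trans hzy.reachable

theorem reachable_splitLift_of_reachable (hN : G.neighborSet v ⊆ N1 ∪ N2)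
    {S : Set (Option V)}
    {x y : ((⊤ : G.Subgraph).deleteVerts ((fun w : Option V => w.getD v) '' S)).verts}
    (hxy : (G ⊖ᵥ (fun w : Option V => w.getD v) '' S).Reachable x y) :
    (splitGraph G v N1 N2 ⊖ᵥ S).Reachable (splitLift G N1 N2 S x) (splitLift G N1 N2 S y) := by
  refine hxy.map_of_forall_adj _ fun x y hxy => ?_
  replace hxy := Subgraph.deleteVerts_top_coe_adj.mp hxy
  by_cases hx : x.1 = v
  · obtain ⟨x, hxU⟩ := x
    obtain rfl : x = v := hx
    exact reachable_splitLift_of_adj_split_vertex hN hxU hxy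
  by_cases hy : y.1 = v
  · obtain ⟨y, hyU⟩ := y
    obtain rfl : y = v := hy
    exact (reachable_splitLift_of_adj_split_vertex hN hyU hxy.symm).symm
  exact (Subgraph.deleteVerts_top_coe_adj.mpr
    ((splitGraph_adj_some_some hx hy).mpr hxy)).reachable

theorem splitGraph_exists_eq_some_or_adj_some [Finite V] (hs : IsValidSplitData G v N1 N2)
    {S : Set (Option V)} (hS : S.ncard ≤ 2) {w : Option V} (hw : w ∉ S) :
    ∃ a ∉ (fun w : Option V => w.getD v) '' S,
      w = some a ∨ (splitGraph G v N1 N2).Adj w (some a) := by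
  have hU : ((fun w : Option V => w.getD v) '' S).ncard ≤ 2 :=
    (Set.ncard_image_le S.toFinite).trans hS
  have hvN (N : Set V) (hN : N ⊆ G.neighborSet v) : v ∉ N :=
    fun h => G.notMem_neighborSet_self (hN h)
  rcases w with _ | a
  · by_cases hv : v ∈ (fun w : Option V => w.getD v) '' S
    · obtain ⟨b, hb, hbU⟩ := Set.exists_mem_notMem_of_ncard_le_ncard hv
        (hvN N2 (hs.1 ▸ Set.subset_union_right)) (hU.trans hs.2.2.2)
      exact ⟨b, hbU, Or.inr (splitGraph_adj_none_of_mem_right hb)⟩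
    · exact ⟨v, hv, Or.inr splitGraph_adj_some_none.symm⟩
  · by_cases ha : a ∈ (fun w : Option V => w.getD v) '' S
    · obtain rfl := eq_of_mem_image_getD ha hw
      obtain ⟨b, hb, hbU⟩ := Set.exists_mem_notMem_of_ncard_le_ncard ha
        (hvN N1 (hs.1 ▸ Set.subset_union_left)) (hU.trans hs.2.2.1)
      exact ⟨b, hbU, Or.inr (splitGraph_adj_some_of_mem_left hb (by rintro rfl; exact hbU ha))⟩
    · exact ⟨a, ha, Or.inl rfl⟩

theorem splitGraph_deleteVerts_connected [Finite V] (hs : IsValidSplitData G v N1 N2)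
    {S : Set (Option V)} (hS : S.ncard ≤ 2)
    (hconn : (G ⊖ᵥ (fun w : Option V => w.getD v) '' S).Connected) :
    (splitGraph G v N1 N2 ⊖ᵥ S).Connected := by
  have hN : G.neighborSet v ⊆ N1 ∪ N2 := hs.1.symm.subset
  obtain ⟨x₀⟩ := hconn.nonempty
  rw [connected_iff_exists_forall_reachable]
  refine ⟨splitLift G N1 N2 S x₀, ?_⟩
  rintro ⟨w, -, hw⟩
  obtain ⟨a, ha, rfl | hwa⟩ := splitGraph_exists_eq_some_or_adj_some hs hS hw
  · exact reachable_splitLift_of_reachable hN (hconn.preconnected x₀ ⟨a, trivial, ha⟩)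
  · refine (reachable_splitLift_of_reachable hN
      (hconn.preconnected x₀ ⟨a, trivial, ha⟩)).trans ?_
    exact (Subgraph.deleteVerts_top_coe_adj.mpr hwa.symm).reachable

end splitGraph

end SimpleGraph

theorem split_threeConnected_general {V : Type u} (G : SimpleGraph V)
    (hG : ThreeConnected G) (v : V) (N1 N2 : Set V)
    (hs : IsValidSplitData G v N1 N2) :
    ThreeConnected (splitGraph G v N1 N2) := by
  obtain ⟨hcard, hconn⟩ := hG
  have : Finite V := Nat.finite_of_card_ne_zero (by omega)
  refine ⟨by rw [Finite.card_option]; omega, fun S hS => ?_⟩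
  exact splitGraph_deleteVerts_connected hs hS
    (hconn _ ((Set.ncard_image_le S.toFinite).trans hS))

/-- splitting a vertex of degree ≥ 4 in a 3-connected graph
yields a 3-connected graph. -/
theorem split_threeConnected {V : Type u} [Fintype V] (G : SimpleGraph V)
    (hG : ThreeConnected G) (v : V) (N1 N2 : Set V)
    (hdeg : 4 ≤ (G.neighborSet v).ncard)
    (hs : IsValidSplitData G v N1 N2) :
    ThreeConnected (splitGraph G v N1 N2) :=
  split_threeConnected_general G hG v N1 N2 hs
end

section
/- Let G be a weakly 4-connected graph with a disk system D, and let u, x, y be vertices of G such that x and y are adjacent, u is not confluent with the edge xy, u is confluent with x, u is confluent with y, u is adjacent to x, and the graph G^+ is obtained from G by subdividing the edge xy and joining u to the new vertex. Then the edges xy and xu are not confluent, and G^+ minus the edge xu is isomorphic to a graph obtained from G by a non-conforming split of the vertex x. -/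
open SimpleGraph

universe u v

/-! Neither disk through `xy` contains `z`, so on each of them `x` continues along an edge
`xw` with `w ∉ {y, z}`. The two continuations differ: otherwise the two disks would share the
path `y x w`, so by (D3) their intersection is a segment with `x` as an inner vertex, forcing
`x` to have degree two although it has the three neighbours `y`, `z`, `w`. Hence splitting `x`
into `{y, z}` and the rest of its neighbourhood is valid, and it is non-conforming because both
disks through `xy` cross it and meet in `y` as well as in `x`. In `G⁺ - xz` the subdivision
vertex is adjacent to exactly `x`, `y`, `z`, so it is the half of `x` carrying `{y, z}`. -/

theorem IsCycleSub.exists_adj_ne {V : Type u} {G : SimpleGraph V} {C : G.Subgraph}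
    (hC : IsCycleSub C) {x y : V} (h : C.Adj x y) : ∃ w, C.Adj x w ∧ w ≠ y := by
  obtain ⟨a, b, hab, hN⟩ := Set.ncard_eq_two.mp (hC.2.2 x (C.edge_vert h))
  have ha : C.Adj x a := by simp [← Subgraph.mem_neighborSet, hN]
  have hb : C.Adj x b := by simp [← Subgraph.mem_neighborSet, hN]
  by_cases hay : a = y
  · exact ⟨b, hb, hay ▸ hab.symm⟩
  · exact ⟨a, ha, hay⟩

theorem IsCycleSub.exists_adj_mem_neighborSet_diff_pair {V : Type u} {G : SimpleGraph V}
    {C : G.Subgraph} (hC : IsCycleSub C) {x y z : V} (hxy : C.Adj x y) (hz : z ∉ C.verts) :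
    ∃ w, C.Adj x w ∧ w ∈ G.neighborSet x \ {y, z} := by
  obtain ⟨w, hxw, hwy⟩ := hC.exists_adj_ne hxy
  have hwz : w ≠ z := fun h => hz (h ▸ C.edge_vert hxw.symm)
  exact ⟨w, hxw, C.adj_sub hxw, by simp [hwy, hwz]⟩

theorem two_lt_ncard_neighborSet {V : Type u} [Finite V] {G : SimpleGraph V} {x y z w : V}
    (hy : G.Adj x y) (hz : G.Adj x z) (hw : G.Adj x w) (hyz : y ≠ z) (hyw : y ≠ w)
    (hzw : z ≠ w) : 2 < (G.neighborSet x).ncard := by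
  have h := Set.ncard_le_ncard (t := G.neighborSet x) (Set.insert_subset hy (Set.pair_subset hz hw))
  rwa [Set.ncard_eq_three.mpr ⟨y, z, w, hyz, hyw, hzw, rfl⟩] at h

theorem IsCDC.exists_ne_adj {V : Type u} {G : SimpleGraph V} {D : Set G.Subgraph}
    (hD : IsCDC G D) {x y : V} (hxy : G.Adj x y) :
    ∃ C₁ C₂, C₁ ≠ C₂ ∧ C₁ ∈ D ∧ C₁.Adj x y ∧ C₂ ∈ D ∧ C₂.Adj x y := by
  obtain ⟨C₁, C₂, hne, hxyC⟩ := Set.ncard_eq_two.mp (hD.2 s(x, y) hxy)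
  have hmem : ∀ C ∈ ({C₁, C₂} : Set G.Subgraph), C ∈ D ∧ C.Adj x y := fun C hC => by
    rw [← hxyC] at hC
    exact ⟨hC.1, Subgraph.mem_edgeSet.mp hC.2⟩
  obtain ⟨hC₁, hxy₁⟩ := hmem C₁ (by simp)
  obtain ⟨hC₂, hxy₂⟩ := hmem C₂ (by simp)
  exact ⟨C₁, C₂, hne, hC₁, hxy₁, hC₂, hxy₂⟩

theorem ConfluentEE.confluentVE {V : Type u} {G : SimpleGraph V} {D : Set G.Subgraph}
    {e : Sym2 V} {x z : V} (h : ConfluentEE D e s(x, z)) : ConfluentVE D z e := by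
  obtain ⟨C, hC, he, hxz⟩ := h
  exact ⟨C, hC, C.edge_vert (Subgraph.mem_edgeSet.mp hxz).symm, he⟩

theorem AxiomD3.ncard_neighborSet_eq_two {V : Type u} [Finite V] {G : SimpleGraph V}
    {D : Set G.Subgraph} (hD3 : AxiomD3 G D) {C₁ C₂ : G.Subgraph} (hC₁ : C₁ ∈ D)
    (hC₂ : C₂ ∈ D) (hne : C₁ ≠ C₂) {x y w : V} (hyw : y ≠ w) (hy : (C₁ ⊓ C₂).Adj x y)
    (hw : (C₁ ⊓ C₂).Adj x w) : (G.neighborSet x).ncard = 2 := by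
  have hx : x ∈ (C₁ ⊓ C₂).verts := (C₁ ⊓ C₂).edge_vert hy
  rcases hD3 C₁ hC₁ C₂ hC₂ hne with hsub | hseg
  · exact absurd (hsub hx ((C₁ ⊓ C₂).edge_vert hy.symm)) hy.ne
  · have h := Set.ncard_le_ncard (Set.pair_subset (s := (C₁ ⊓ C₂).neighborSet x) hy hw)
    rw [Set.ncard_pair hyw] at h
    exact hseg.2.2.1 x hx (le_antisymm (hseg.1.2.2.1 x hx) h)

theorem isValidSplitData_pair {V : Type u} [Finite V] {G : SimpleGraph V} {x y z w₁ w₂ : V}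
    (hy : G.Adj x y) (hz : G.Adj x z) (hyz : y ≠ z) (hw : w₁ ≠ w₂)
    (hw₁ : w₁ ∈ G.neighborSet x \ {y, z}) (hw₂ : w₂ ∈ G.neighborSet x \ {y, z}) :
    IsValidSplitData G x {y, z} (G.neighborSet x \ {y, z}) := by
  refine ⟨Set.union_sdiff_cancel (Set.pair_subset hy hz), Set.disjoint_sdiff_right,
    (Set.ncard_pair hyz).ge, ?_⟩
  rw [← Set.ncard_pair hw]
  exact Set.ncard_le_ncard (Set.pair_subset hw₁ hw₂)

def crossingDisks {V : Type u} {G : SimpleGraph V} (D : Set G.Subgraph) (v : V)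
    (N1 N2 : Set V) : Set G.Subgraph :=
  {C ∈ D | v ∈ C.verts ∧ (C.verts ∩ N1).Nonempty ∧ (C.verts ∩ N2).Nonempty}

theorem mem_crossingDisks_of_adj {V : Type u} {G : SimpleGraph V} {D : Set G.Subgraph}
    {C : G.Subgraph} {v a b : V} {N1 N2 : Set V} (hC : C ∈ D) (ha : C.Adj v a) (haN : a ∈ N1)
    (hb : C.Adj v b) (hbN : b ∈ N2) : C ∈ crossingDisks D v N1 N2 :=
  ⟨hC, C.edge_vert ha, ⟨a, C.edge_vert ha.symm, haN⟩, ⟨b, C.edge_vert hb.symm, hbN⟩⟩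

theorem not_isConformingSplit_of_mem_crossingDisks {V : Type u} {G : SimpleGraph V}
    {D : Set G.Subgraph} {v y : V} {N1 N2 : Set V} {C₁ C₂ : G.Subgraph} (hne : C₁ ≠ C₂)
    (hC₁ : C₁ ∈ crossingDisks D v N1 N2) (hC₂ : C₂ ∈ crossingDisks D v N1 N2)
    (hyv : y ≠ v) (hy₁ : y ∈ C₁.verts) (hy₂ : y ∈ C₂.verts) :
    ¬ IsConformingSplit G D v N1 N2 := by
  rintro ⟨D₁, D₂, -, -, -, -, hcross, hmeet⟩
  have hy : y ∈ (D₁ ⊓ D₂).verts := by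
    change crossingDisks D v N1 N2 = {D₁, D₂} at hcross
    rw [hcross] at hC₁ hC₂
    rcases hC₁ with rfl | rfl <;> rcases hC₂ with rfl | rfl
    exacts [absurd rfl hne, ⟨hy₁, hy₂⟩, ⟨hy₂, hy₁⟩, absurd rfl hne]
  rw [hmeet] at hy
  exact hyv hy

def subdivideJoinDeleteEdgesIsoSplitGraph {V : Type u} [DecidableEq V] (G : SimpleGraph V)
    (x y z : V) :
    (subdivideJoin G x y z).deleteEdges {s(some x, some z)} ≃g
      splitGraph G x {y, z} (G.neighborSet x \ {y, z}) where
  toEquiv := Equiv.swap none (some x)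
  map_rel_iff' {a b} := by
    rcases a with _ | a <;> rcases b with _ | b <;>
      simp only [Equiv.swap_apply_def, reduceCtorEq, if_true, if_false, Option.some.injEq] <;>
      (try split_ifs) <;> (try subst_vars) <;>
      simp [splitGraph, subdivideJoin, SimpleGraph.deleteEdges_adj, SimpleGraph.fromRel_adj, *] <;>
      grind [SimpleGraph.adj_comm]

theorem weak_tedge_special_case_general {V : Type u} [Fintype V]
    (G : SimpleGraph V) (D : Set G.Subgraph)
    (hD : IsDiskSystem G D)
    (x y z : V) (hxy : G.Adj x y)
    (h1 : ¬ ConfluentVE D z s(x, y))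
    (h4 : G.Adj z x) :
    (¬ ConfluentEE D s(x, y) s(x, z)) ∧
    ∃ N1 N2 : Set V, IsValidSplitData G x N1 N2 ∧ ¬ IsConformingSplit G D x N1 N2 ∧
      Nonempty
        (((subdivideJoin G x y z).deleteEdges {s(some x, some z)}) ≃g
          splitGraph G x N1 N2) := by
  classical
  obtain ⟨hcdc, -, hD3⟩ := hD
  obtain ⟨C₁, C₂, hne, hC₁, hxy₁, hC₂, hxy₂⟩ := hcdc.exists_ne_adj hxy
  have hz : ∀ C ∈ D, C.Adj x y → z ∉ C.verts := fun C hC hCxy hzC => h1 ⟨C, hC, hzC, hCxy⟩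
  have hyz : y ≠ z := fun h => hz C₁ hC₁ hxy₁ (h ▸ C₁.edge_vert hxy₁.symm)
  obtain ⟨w₁, hxw₁, hw₁⟩ :=
    (hcdc.1 C₁ hC₁).exists_adj_mem_neighborSet_diff_pair hxy₁ (hz C₁ hC₁ hxy₁)
  obtain ⟨w₂, hxw₂, hw₂⟩ :=
    (hcdc.1 C₂ hC₂).exists_adj_mem_neighborSet_diff_pair hxy₂ (hz C₂ hC₂ hxy₂)
  have hw : w₁ ≠ w₂ := by
    rintro rfl
    have hyw : y ≠ w₁ := fun h => hw₁.2 (by simp [h])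
    have hzw : z ≠ w₁ := fun h => hw₁.2 (by simp [h])
    exact (two_lt_ncard_neighborSet hxy h4.symm hw₁.1 hyz hyw hzw).ne'
      (hD3.ncard_neighborSet_eq_two hC₁ hC₂ hne hyw ⟨hxy₁, hxy₂⟩ ⟨hxw₁, hxw₂⟩)
  refine ⟨fun h => h1 h.confluentVE, {y, z}, G.neighborSet x \ {y, z},
    isValidSplitData_pair hxy h4.symm hyz hw hw₁ hw₂, ?_,
    ⟨subdivideJoinDeleteEdgesIsoSplitGraph G x y z⟩⟩
  exact not_isConformingSplit_of_mem_crossingDisks hne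
    (mem_crossingDisks_of_adj hC₁ hxy₁ (by simp) hxw₁ hw₁)
    (mem_crossingDisks_of_adj hC₂ hxy₂ (by simp) hxw₂ hw₂)
    hxy.ne.symm (C₁.edge_vert hxy₁.symm) (C₂.edge_vert hxy₂.symm)

/-- a special case of the weak T-edge analysis: the edges `xy` and
`xu` are not confluent, and deleting `xu` from the weak T-edge enlargement gives a
non-conforming split of `x`. -/
theorem weak_tedge_special_case {V : Type u} [Fintype V]
    (G : SimpleGraph V) (D : Set G.Subgraph)
    (hG : WeaklyFourConnected G) (hD : IsDiskSystem G D)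
    (x y z : V) (hxy : G.Adj x y)
    (h1 : ¬ ConfluentVE D z s(x, y)) (h2 : ConfluentVV D z x) (h3 : ConfluentVV D z y)
    (h4 : G.Adj z x) :
    (¬ ConfluentEE D s(x, y) s(x, z)) ∧
    ∃ N1 N2 : Set V, IsValidSplitData G x N1 N2 ∧ ¬ IsConformingSplit G D x N1 N2 ∧
      Nonempty
        (((subdivideJoin G x y z).deleteEdges {s(some x, some z)}) ≃g
          splitGraph G x N1 N2) :=
  weak_tedge_special_case_general G D hD x y z hxy h1 h4
end
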